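/- arXiv:2010.03440 — 2 statements merged into one kernel-verified Lean document; each statement's English description precedes it below -/
import Mathlib

section
/- Let p be prime and n ≥ 1. If 1 ≤ k ≤ s_p(n), then the minimum of s_p(j_1)+...+s_p(j_k) - s_p(n) over all positive integers j_1,...,j_k with j_1+...+j_k = n equals 0; equivalently, there exists a multinomial coefficient n!/(j_1!···j_k!) with all parts positive that is not divisible by p. -/
/-- base-p digit sum -/
def sp (p n : ℕ) : ℕ := (Nat.digits p n).sum

/-!
Legendre's formula `(p - 1) v_p(m!) = m - s_p(m)`, applied to `n!` and to every `j_i!`, gives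
`(p - 1) v_p(n! / ∏ j_i!) = ∑ s_p(j_i) - s_p(n)`. Hence the excess is never negative, and it
vanishes exactly when `p` does not divide the multinomial coefficient. A decomposition with excess
`0` comes from splitting `n` into powers of `p`: subtracting `p ^ e` at a nonzero digit lowers the
digit sum by one, so `k - 1` such powers can be peeled off, the remainder forming the last part.
-/

open Nat Finset

section DigitSum

variable {p : ℕ}

lemma sp_add_base_mul (hp : 1 < p) {x : ℕ} (hx : x < p) (y : ℕ) :
    sp p (x + p * y) = x + sp p y := by
  by_cases h : x = 0 ∧ y = 0
  · obtain ⟨rfl, rfl⟩ := h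
    simp [sp]
  · rw [sp, digits_add p hp x y hx (not_and_or.1 h), List.sum_cons, sp]

lemma sp_base_mul (hp : 1 < p) (y : ℕ) : sp p (p * y) = sp p y := by
  simpa using sp_add_base_mul hp (zero_lt_of_lt hp) y

lemma sp_base_pow (hp : 1 < p) (e : ℕ) : sp p (p ^ e) = 1 := by
  simpa [sp, digits_of_lt p 1 one_ne_zero hp] using
    congrArg List.sum (digits_base_pow_mul (k := e) hp one_pos)

lemma exists_pow_le_and_sp_sub_pow_add_one_eq (hp : 1 < p) {n : ℕ} (hn : n ≠ 0) :
    ∃ e, p ^ e ≤ n ∧ sp p (n - p ^ e) + 1 = sp p n := by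
  induction n using Nat.strong_induction_on with
  | _ n ih =>
  obtain ⟨r, q, hr, rfl⟩ : ∃ r q, r < p ∧ n = r + p * q :=
    ⟨n % p, n / p, mod_lt n (zero_lt_of_lt hp), (mod_add_div n p).symm⟩
  rcases Nat.eq_zero_or_pos r with rfl | hr0
  · have hq : q ≠ 0 := by rintro rfl; simp at hn
    obtain ⟨e, hle, hsp⟩ := ih q (by nlinarith [Nat.pos_of_ne_zero hq]) hq
    refine ⟨e + 1, by rw [pow_succ', zero_add]; exact Nat.mul_le_mul_left p hle, ?_⟩
    rw [zero_add, pow_succ', ← Nat.mul_sub, sp_base_mul hp, sp_base_mul hp, hsp]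
  · refine ⟨0, by rw [pow_zero]; omega, ?_⟩
    rw [pow_zero, show r + p * q - 1 = (r - 1) + p * q by omega, sp_add_base_mul hp (by omega),
      sp_add_base_mul hp hr]
    omega

lemma exists_pos_parts_sum_sp_eq (hp : 1 < p) {k n : ℕ} (hk : 1 ≤ k) (hkn : k ≤ sp p n) :
    ∃ j : Fin k → ℕ, (∀ i, 1 ≤ j i) ∧ ∑ i, j i = n ∧ ∑ i, sp p (j i) = sp p n := by
  induction k, hk using Nat.le_induction generalizing n with
  | base =>
    have hn : n ≠ 0 := by rintro rfl; simp [sp] at hkn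
    exact ⟨fun _ => n, fun _ => Nat.one_le_iff_ne_zero.2 hn, by simp, by simp⟩
  | succ k hk ih =>
    have hn : n ≠ 0 := by rintro rfl; simp [sp] at hkn
    obtain ⟨e, hle, hsp⟩ := exists_pow_le_and_sp_sub_pow_add_one_eq hp hn
    obtain ⟨j, hpos, hsum, hjsp⟩ := ih (n := n - p ^ e) (by omega)
    refine ⟨Fin.cons (p ^ e) j, Fin.forall_fin_succ.2 ⟨Nat.one_le_pow _ _ (zero_lt_of_lt hp), hpos⟩,
      ?_, ?_⟩
    · rw [Fin.sum_univ_succ]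
      simp only [Fin.cons_zero, Fin.cons_succ, hsum]
      omega
    · rw [Fin.sum_univ_succ]
      simp only [Fin.cons_zero, Fin.cons_succ, hjsp, sp_base_pow hp]
      omega

end DigitSum

section Valuation

variable {p : ℕ} [hp : Fact p.Prime]

lemma sp_add_sub_one_mul_padicValNat_factorial (n : ℕ) :
    sp p n + (p - 1) * padicValNat p n ! = n := by
  rw [sub_one_mul_padicValNat_factorial, sp]
  exact Nat.add_sub_cancel' (digit_sum_le p n)

lemma padicValNat_finset_prod {ι : Type*} {s : Finset ι} {g : ι → ℕ} (hg : ∀ i ∈ s, g i ≠ 0) :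
    padicValNat p (∏ i ∈ s, g i) = ∑ i ∈ s, padicValNat p (g i) := by
  rw [← factorization_def _ hp.out, factorization_prod hg, Finsupp.finsetSum_apply]
  exact sum_congr rfl fun i _ => factorization_def _ hp.out

lemma sub_one_mul_padicValNat_multinomial_add_sp {ι : Type*} (s : Finset ι) (f : ι → ℕ) :
    (p - 1) * padicValNat p (multinomial s f) + sp p (∑ i ∈ s, f i) = ∑ i ∈ s, sp p (f i) := by
  have hspec := congrArg (padicValNat p) (multinomial_spec s f)
  rw [padicValNat.mul (prod_ne_zero_iff.2 fun i _ => factorial_ne_zero _)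
    (multinomial_pos s f).ne', padicValNat_finset_prod fun i _ => factorial_ne_zero _] at hspec
  have htotal := sp_add_sub_one_mul_padicValNat_factorial (p := p) (∑ i ∈ s, f i)
  have hparts : ∑ i ∈ s, f i =
      ∑ i ∈ s, sp p (f i) + (p - 1) * ∑ i ∈ s, padicValNat p (f i)! := by
    rw [mul_sum, ← sum_add_distrib]
    exact sum_congr rfl fun i _ => (sp_add_sub_one_mul_padicValNat_factorial (f i)).symm
  rw [← hspec, mul_add] at htotal
  omega

lemma sp_sum_le_sum_sp {ι : Type*} (s : Finset ι) (f : ι → ℕ) :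
    sp p (∑ i ∈ s, f i) ≤ ∑ i ∈ s, sp p (f i) :=
  (sub_one_mul_padicValNat_multinomial_add_sp (p := p) s f).symm ▸ Nat.le_add_left _ _

lemma dvd_multinomial_iff_sp_sum_lt_sum_sp {ι : Type*} (s : Finset ι) (f : ι → ℕ) :
    p ∣ multinomial s f ↔ sp p (∑ i ∈ s, f i) < ∑ i ∈ s, sp p (f i) := by
  rw [dvd_iff_padicValNat_ne_zero (p := p) (multinomial_pos s f).ne',
    ← sub_one_mul_padicValNat_multinomial_add_sp (p := p) s f, lt_add_iff_pos_left,
    Nat.mul_pos_iff_of_pos_left (Nat.sub_pos_of_lt hp.out.one_lt), Nat.pos_iff_ne_zero]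

end Valuation

theorem min_digitSum_excess_eq_zero_general (p : ℕ) (hp : p.Prime) (n k : ℕ)
    (hk1 : 1 ≤ k) (hk2 : k ≤ sp p n) :
    IsLeast {m : ℤ | ∃ j : Fin k → ℕ, (∀ i, 1 ≤ j i) ∧ (∑ i, j i = n) ∧
        (∑ i, (sp p (j i) : ℤ)) - (sp p n : ℤ) = m} 0 ∧
      ∃ j : Fin k → ℕ, (∀ i, 1 ≤ j i) ∧ (∑ i, j i = n) ∧
        ¬ p ∣ Nat.multinomial Finset.univ j := by
  have : Fact p.Prime := ⟨hp⟩
  obtain ⟨j, hpos, hsum, hsp⟩ := exists_pos_parts_sum_sp_eq hp.one_lt hk1 hk2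
  refine ⟨⟨⟨j, hpos, hsum, by rw [← Nat.cast_sum, hsp, sub_self]⟩, ?_⟩, j, hpos, hsum, ?_⟩
  · rintro _ ⟨j', -, hsum', rfl⟩
    have hle := sp_sum_le_sum_sp (p := p) univ j'
    rw [hsum'] at hle
    rw [← Nat.cast_sum, sub_nonneg]
    exact_mod_cast hle
  · rw [dvd_multinomial_iff_sp_sum_lt_sum_sp, hsum, hsp]
    exact lt_irrefl _

theorem min_digitSum_excess_eq_zero (p : ℕ) (hp : p.Prime) (n k : ℕ)
    (hn : 1 ≤ n) (hk1 : 1 ≤ k) (hk2 : k ≤ sp p n) :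
    IsLeast {m : ℤ | ∃ j : Fin k → ℕ, (∀ i, 1 ≤ j i) ∧ (∑ i, j i = n) ∧
        (∑ i, (sp p (j i) : ℤ)) - (sp p n : ℤ) = m} 0 ∧
      ∃ j : Fin k → ℕ, (∀ i, 1 ≤ j i) ∧ (∑ i, j i = n) ∧
        ¬ p ∣ Nat.multinomial Finset.univ j :=
  min_digitSum_excess_eq_zero_general p hp n k hk1 hk2
end

section
/- For every word w of length n ≥ 1 over {A, B}, the denominator of the coefficient of w in the Baker–Campbell–Hausdorff series H = log(e^A e^B) divides n! · d_n, where d_n = ∏_{p prime, p < n} p^{max{t : p^t ≤ s_p(n)}}. -/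
/-- Coefficient of the word `w` in the product `X₁ ⋯ X_K` of formal power series in
noncommuting variables, each series being given by its coefficient function `List A → ℚ`. -/
def prodCoeff {A : Type*} : List (List A → ℚ) → List A → ℚ
  | [], [] => 1
  | [], _ :: _ => 0
  | X :: Xs, w => ∑ i ∈ Finset.range (w.length + 1),
      X (List.take i w) * prodCoeff Xs (List.drop i w)

/-- Coefficient function of `exp` of the single noncommuting variable `a`. -/
def expCoeff {A : Type*} [DecidableEq A] (a : A) (w : List A) : ℚ :=
  if ∀ x ∈ w, x = a then 1 / (Nat.factorial w.length) else 0

/-- Alphabet `{A, B}` modelled as `Bool`, with `A = false`, `B = true`.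
Coefficient function of `Y = e^A e^B - 1`. -/
def Ycoeff (w : List Bool) : ℚ :=
  prodCoeff [expCoeff false, expCoeff true] w - (if w.isEmpty then 1 else 0)

/-- Coefficient of `w` in the BCH series `H = log(e^A e^B) = Σ_{k≥1} ((-1)^{k+1}/k) Yᵏ`.
Since `Y` has no constant term, the series may be truncated at `k = |w|`. -/
def bchCoeff (w : List Bool) : ℚ :=
  ∑ k ∈ Finset.Icc 1 w.length,
    ((-1 : ℚ) ^ (k + 1) / k) * prodCoeff (List.replicate k Ycoeff) w

/-- `d n = ∏_{p prime, p < n} p ^ (max { t : p ^ t ≤ sₚ(n) })`. -/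
def dn (n : ℕ) : ℕ :=
  ∏ p ∈ (Finset.range n).filter Nat.Prime, p ^ Nat.log p (sp p n)

/-!
Normalise the coefficient of a word of length `m` by `m!`. Then the coefficient of a product
becomes a binomial convolution, `m! [w](X P) = ∑ᵢ C(m, i) · i! [w₁…wᵢ]X · (m-i)! [wᵢ₊₁…wₘ]P`, and
the normalised coefficients of `Y = e^A e^B - 1` are integers vanishing on the empty word. So
`m! [w]Yᵏ` is an integer, and it is divisible by `p^t` as soon as `s_p(m) + (t-1)(p-1) < k`: peeling
off one factor `Y` costs a binomial coefficient whose `p`-adic valuation `ν` satisfies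
`(p-1) ν = s_p(i) + s_p(m-i) - s_p(m)` (Kummer), and `s_p(i) ≥ 1`.

For `k ≤ n` this gives `k ∣ d_n · n! [w]Yᵏ`: if `p^j ∣ k` with `j ≤ L = ⌊log_p s_p(n)⌋`, then
`p^j ∣ d_n`; otherwise `s_p(n) < p^(L+1)` and `p^j ≤ k` give `s_p(n) + (j-L-1)(p-1) < k`, so
`p^(j-L)` divides the normalised coefficient.
-/

open AddSubgroup Finset
open scoped Nat

lemma mul_mem_zmultiples_mul {R : Type*} [CommRing R] {a b c d : R}
    (ha : a ∈ zmultiples c) (hb : b ∈ zmultiples d) : a * b ∈ zmultiples (c * d) := by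
  obtain ⟨x, rfl⟩ := mem_zmultiples_iff.mp ha
  obtain ⟨y, rfl⟩ := mem_zmultiples_iff.mp hb
  exact mem_zmultiples_iff.mpr ⟨x * y, by simp only [zsmul_eq_mul, Int.cast_mul]; ring⟩

lemma natCast_mem_zmultiples_natCast {R : Type*} [CommRing R] {m n : ℕ} (h : m ∣ n) :
    (n : R) ∈ zmultiples (m : R) := by
  obtain ⟨c, rfl⟩ := h
  exact mem_zmultiples_iff.mpr
    ⟨c, by simp only [zsmul_eq_mul, Int.cast_natCast, Nat.cast_mul]; ring⟩

lemma natCast_mem_zmultiples_one (n : ℕ) : (n : ℚ) ∈ zmultiples (1 : ℚ) := by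
  simpa using natCast_mem_zmultiples_natCast (R := ℚ) (one_dvd n)

lemma dvd_of_intCast_mem_zmultiples {a b : ℤ} (h : (a : ℚ) ∈ zmultiples (b : ℚ)) : b ∣ a := by
  obtain ⟨k, hk⟩ := mem_zmultiples_iff.mp h
  exact ⟨k, by rw [zsmul_eq_mul] at hk; exact_mod_cast (by rw [← hk, mul_comm] : (a : ℚ) = b * k)⟩

lemma Rat.den_dvd_of_mul_mem_zmultiples_one {q : ℚ} {d : ℕ} (h : q * d ∈ zmultiples (1 : ℚ)) :
    q.den ∣ d := by
  rcases eq_or_ne d 0 with rfl | hd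
  · exact dvd_zero _
  obtain ⟨z, hz⟩ := mem_zmultiples_iff.mp h
  have hq : q = Rat.divInt z d := by
    rw [Rat.divInt_eq_div, Int.cast_natCast, eq_div_iff (by exact_mod_cast hd), ← hz, zsmul_one]
  exact_mod_cast hq ▸ Rat.den_dvd z d

section prodCoeff

variable {A : Type*}

lemma factorial_mul_prodCoeff_cons (X : List A → ℚ) (Xs : List (List A → ℚ)) (w : List A) :
    (w.length ! : ℚ) * prodCoeff (X :: Xs) w = ∑ i ∈ range (w.length + 1),
      (w.length.choose i : ℚ) * ((w.take i).length ! * X (w.take i)) *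
        ((w.drop i).length ! * prodCoeff Xs (w.drop i)) := by
  rw [prodCoeff, mul_sum]
  refine sum_congr rfl fun i hi => ?_
  have hi : i ≤ w.length := Nat.lt_succ_iff.mp (mem_range.mp hi)
  rw [List.length_take, List.length_drop, min_eq_left hi,
    ← Nat.choose_mul_factorial_mul_factorial hi]
  push_cast
  ring

lemma factorial_mul_prodCoeff_mem_zmultiples_one {Xs : List (List A → ℚ)}
    (hXs : ∀ X ∈ Xs, ∀ v, (v.length ! : ℚ) * X v ∈ zmultiples (1 : ℚ)) (w : List A) :
    (w.length ! : ℚ) * prodCoeff Xs w ∈ zmultiples (1 : ℚ) := by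
  induction Xs generalizing w with
  | nil =>
    cases w with
    | nil => simp [prodCoeff]
    | cons _ _ => simp [prodCoeff]
  | cons X Xs ih =>
    rw [factorial_mul_prodCoeff_cons]
    refine sum_mem fun i _ => ?_
    simpa using mul_mem_zmultiples_mul
      (mul_mem_zmultiples_mul (natCast_mem_zmultiples_one _) (hXs X (by simp) (w.take i)))
      (ih (fun Y hY => hXs Y (List.mem_cons_of_mem X hY)) (w.drop i))

lemma factorial_mul_prodCoeff_replicate_mem_zmultiples_one {X : List A → ℚ}
    (hX : ∀ v, (v.length ! : ℚ) * X v ∈ zmultiples (1 : ℚ)) (k : ℕ) (w : List A) :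
    (w.length ! : ℚ) * prodCoeff (List.replicate k X) w ∈ zmultiples (1 : ℚ) :=
  factorial_mul_prodCoeff_mem_zmultiples_one
    (fun _ hY v => (List.eq_of_mem_replicate hY).symm ▸ hX v) w

end prodCoeff

lemma factorial_mul_expCoeff_mem_zmultiples_one {A : Type*} [DecidableEq A] (a : A)
    (v : List A) : (v.length ! : ℚ) * expCoeff a v ∈ zmultiples (1 : ℚ) := by
  unfold expCoeff
  split_ifs
  · rw [mul_one_div_cancel (by positivity)]
    exact mem_zmultiples 1
  · rw [mul_zero]
    exact zero_mem _

lemma Ycoeff_nil : Ycoeff [] = 0 := by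
  simp [Ycoeff, prodCoeff, expCoeff]

lemma factorial_mul_Ycoeff_mem_zmultiples_one (v : List Bool) :
    (v.length ! : ℚ) * Ycoeff v ∈ zmultiples (1 : ℚ) := by
  rw [Ycoeff, mul_sub]
  refine sub_mem (factorial_mul_prodCoeff_mem_zmultiples_one ?_ v) ?_
  · simp only [List.mem_cons, List.not_mem_nil, or_false]
    rintro X (rfl | rfl) <;> exact factorial_mul_expCoeff_mem_zmultiples_one _
  · split_ifs
    · simpa using natCast_mem_zmultiples_one _
    · simp

lemma sp_pos {p n : ℕ} (hn : n ≠ 0) : 0 < sp p n :=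
  Nat.pos_of_ne_zero fun h =>
    Nat.getLast_digit_ne_zero p hn (List.sum_eq_zero_iff.mp h _ (List.getLast_mem _))

lemma sp_self {p : ℕ} (hp : 1 < p) : sp p p = 1 := by
  have h := Nat.digits_base_mul hp one_pos
  rw [mul_one, Nat.digits_of_lt p 1 one_ne_zero hp] at h
  simp [sp, h]

-- Kummer's theorem, in a form free of truncated subtraction.
lemma sp_add_sp_sub {p m i : ℕ} (hp : p.Prime) (him : i ≤ m) :
    sp p i + sp p (m - i) = sp p m + (p - 1) * padicValNat p (m.choose i) := by
  have := Fact.mk hp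
  have hval : padicValNat p m ! =
      padicValNat p (m.choose i) + padicValNat p i ! + padicValNat p (m - i)! := by
    rw [← Nat.choose_mul_factorial_mul_factorial him,
      padicValNat.mul (mul_ne_zero (Nat.choose_pos him).ne' i.factorial_ne_zero)
        (m - i).factorial_ne_zero,
      padicValNat.mul (Nat.choose_pos him).ne' i.factorial_ne_zero]
  have legendre := congrArg ((p - 1) * ·) hval
  simp only [mul_add, sub_one_mul_padicValNat_factorial] at legendre
  have := Nat.digit_sum_le p m
  have := Nat.digit_sum_le p i
  have := Nat.digit_sum_le p (m - i)
  unfold sp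
  omega

lemma sp_sub_add_lt {p m i t k : ℕ} (hp : p.Prime) (hi : 0 < i) (him : i ≤ m)
    (hν : padicValNat p (m.choose i) < t) (h : sp p m + (t - 1) * (p - 1) < k + 1) :
    sp p (m - i) + (t - padicValNat p (m.choose i) - 1) * (p - 1) < k := by
  have hkummer := sp_add_sp_sub hp him
  have hsp := sp_pos (p := p) hi.ne'
  have hsplit : (t - 1) * (p - 1) =
      (t - padicValNat p (m.choose i) - 1) * (p - 1) + (p - 1) * padicValNat p (m.choose i) := by
    rw [mul_comm (p - 1), ← add_mul]
    congr 1
    omega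
  omega

lemma add_mul_sub_one_lt_pow {p a s : ℕ} (hp : 1 ≤ p) (hs : s < p ^ a) (u : ℕ) :
    s + u * (p - 1) < p ^ (a + u) := by
  obtain ⟨c, rfl⟩ := Nat.exists_eq_add_of_le' hp
  rw [Nat.add_sub_cancel]
  induction u with
  | zero => simpa using hs
  | succ u ih =>
    have : 1 ≤ (c + 1) ^ (a + u) := Nat.one_le_pow _ _ (Nat.succ_pos c)
    rw [← add_assoc, pow_succ]
    nlinarith [Nat.mul_le_mul_right c this]

theorem factorial_mul_prodCoeff_replicate_mem_zmultiples_pow {A : Type*} {p : ℕ} (hp : p.Prime)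
    {X : List A → ℚ} (hX₀ : X [] = 0) (hX : ∀ v, (v.length ! : ℚ) * X v ∈ zmultiples (1 : ℚ))
    (k t : ℕ) (w : List A) (hk : sp p w.length + (t - 1) * (p - 1) < k) :
    (w.length ! : ℚ) * prodCoeff (List.replicate k X) w ∈ zmultiples ((p : ℚ) ^ t) := by
  induction k generalizing t w with
  | zero => exact absurd hk (Nat.not_lt_zero _)
  | succ k ih =>
    rw [List.replicate_succ, factorial_mul_prodCoeff_cons]
    refine sum_mem fun i hi => ?_
    have him : i ≤ w.length := Nat.lt_succ_iff.mp (mem_range.mp hi)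
    rcases Nat.eq_zero_or_pos i with rfl | hi₀
    · simp [hX₀]
    set ν := padicValNat p (w.length.choose i)
    have hchoose : ∀ s ≤ ν, (w.length.choose i : ℚ) ∈ zmultiples ((p : ℚ) ^ s) := fun s hs => by
      exact_mod_cast natCast_mem_zmultiples_natCast ((pow_dvd_pow p hs).trans pow_padicValNat_dvd)
    suffices ∃ s ≤ t, (w.length.choose i : ℚ) ∈ zmultiples ((p : ℚ) ^ s) ∧
        ((w.drop i).length ! : ℚ) * prodCoeff (List.replicate k X) (w.drop i) ∈
          zmultiples ((p : ℚ) ^ (t - s)) by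
      obtain ⟨s, hst, hC, hP⟩ := this
      simpa [← pow_add, Nat.add_sub_cancel' hst] using
        mul_mem_zmultiples_mul (mul_mem_zmultiples_mul hC (hX (w.take i))) hP
    rcases le_or_gt t ν with htν | hνt
    · refine ⟨t, le_rfl, hchoose t htν, ?_⟩
      simpa using factorial_mul_prodCoeff_replicate_mem_zmultiples_one hX k (w.drop i)
    · refine ⟨ν, hνt.le, hchoose ν le_rfl, ih _ _ ?_⟩
      rw [List.length_drop]
      exact sp_sub_add_lt hp hi₀ him hνt hk

lemma pow_log_sp_dvd_dn {p n : ℕ} (hp : p.Prime) (hpn : p ≤ n) :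
    p ^ Nat.log p (sp p n) ∣ dn n := by
  rcases hpn.lt_or_eq with h | rfl
  · exact dvd_prod_of_mem _ (mem_filter.mpr ⟨mem_range.mpr h, hp⟩)
  · simp [sp_self hp.one_lt]

lemma natCast_dvd_dn_mul {n k : ℕ} (hk : 0 < k) (hkn : k ≤ n) {z : ℤ}
    (hz : ∀ p t, p.Prime → sp p n + (t - 1) * (p - 1) < k → (p : ℤ) ^ t ∣ z) :
    (k : ℤ) ∣ dn n * z := by
  rw [Int.natCast_dvd, Int.natAbs_mul, Int.natAbs_natCast]
  refine (Nat.dvd_iff_prime_pow_dvd_dvd _ k).mpr fun p j hp hpj => ?_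
  rcases Nat.eq_zero_or_pos j with rfl | hj
  · simp
  have hpjk : p ^ j ≤ k := Nat.le_of_dvd hk hpj
  set L := Nat.log p (sp p n)
  have hL : p ^ L ∣ dn n :=
    pow_log_sp_dvd_dn hp ((Nat.le_self_pow hj.ne' p).trans (hpjk.trans hkn))
  rcases le_or_gt j L with hjL | hLj
  · exact ((pow_dvd_pow p hjL).trans hL).mul_right _
  have hlt : sp p n + (j - L - 1) * (p - 1) < k := by
    have := add_mul_sub_one_lt_pow hp.one_le (Nat.lt_pow_succ_log_self hp.one_lt (sp p n))
      (j - L - 1)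
    rw [show L + 1 + (j - L - 1) = j by omega] at this
    omega
  have hdvd := Int.natAbs_dvd_natAbs.mpr (hz p (j - L) hp hlt)
  rw [Int.natAbs_pow, Int.natAbs_natCast] at hdvd
  rw [show j = L + (j - L) by omega, pow_add]
  exact mul_dvd_mul hL hdvd

theorem den_bchCoeff_dvd_general (n : ℕ) (w : List Bool) (hw : w.length = n) :
    (bchCoeff w).den ∣ n.factorial * dn n := by
  subst hw
  apply Rat.den_dvd_of_mul_mem_zmultiples_one
  rw [bchCoeff, sum_mul]
  refine sum_mem fun k hk => ?_
  obtain ⟨hk₁, hkn⟩ := mem_Icc.mp hk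
  obtain ⟨z, hz⟩ := mem_zmultiples_iff.mp <|
    factorial_mul_prodCoeff_replicate_mem_zmultiples_one factorial_mul_Ycoeff_mem_zmultiples_one k w
  rw [zsmul_one] at hz
  obtain ⟨y, hy⟩ : (k : ℤ) ∣ dn w.length * z := natCast_dvd_dn_mul hk₁ hkn fun p t hp ht =>
    dvd_of_intCast_mem_zmultiples <| by
      push_cast
      rw [hz]
      exact factorial_mul_prodCoeff_replicate_mem_zmultiples_pow hp Ycoeff_nil
        factorial_mul_Ycoeff_mem_zmultiples_one k t w ht
  refine mem_zmultiples_iff.mpr ⟨(-1) ^ (k + 1) * y, ?_⟩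
  rw [zsmul_one]
  have hk₀ : (k : ℚ) ≠ 0 := by positivity
  have hy' : (dn w.length : ℚ) * z = k * y := by exact_mod_cast hy
  calc (((-1) ^ (k + 1) * y : ℤ) : ℚ) = (-1) ^ (k + 1) / k * (dn w.length * z) := by
        rw [hy']; push_cast; field_simp
    _ = _ := by rw [hz]; push_cast; ring

theorem den_bchCoeff_dvd (n : ℕ) (hn : 1 ≤ n) (w : List Bool) (hw : w.length = n) :
    (bchCoeff w).den ∣ n.factorial * dn n :=
  den_bchCoeff_dvd_general n w hw
end
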